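/- Under the MRL construction, the global covariance matrix K with blocks K*_1(X1,X1), K*_1(X1,XB), K_B, K*_2(X2,XB), K*_2(X2,X2), and cross-term D = G1 K_B G2^T is symmetric positive semidefinite, provided K_1 and K_2 are positive semidefinite, their boundary blocks equal K_B, and K_B is invertible. -/

import Mathlib

/-!
Regard `K` as a 2 × 2 block matrix over `X1 ⊕ (XB ⊕ X2)` and put `H = [G1 0]`. Since
`K2(XB, X2) = KB G2ᵀ`, we have `D = G1 K2(XB, X2)`, so the off-diagonal block of `K` is `H K2`.
A block matrix `[[E, H M], [M Hᴴ, M]]` with `M` positive semidefinite is positive semidefinite iff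
`E - H M Hᴴ` is, with no invertibility of `M` needed. Here `E - H K2 Hᵀ = K1(X1, X1) - G1 KB G1ᵀ`
is the Schur complement of `KB` in `K1 = [[K1(X1, X1), G1 KB], [KB G1ᵀ, KB]]`, positive
semidefinite by the same criterion.
-/

open Matrix

namespace Matrix

variable {m n R : Type*}

theorem IsHermitian.conjTranspose_toBlocks₁₂ [Star R] {M : Matrix (m ⊕ n) (m ⊕ n) R}
    (hM : M.IsHermitian) : M.toBlocks₁₂ᴴ = M.toBlocks₂₁ :=
  congrArg toBlocks₂₁ hM

variable [Fintype m] [Fintype n] [Ring R] [PartialOrder R] [StarRing R]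

theorem posSemidef_fromBlocks_mul_iff [AddLeftMono R] {M : Matrix n n R} (hM : M.PosSemidef)
    (E : Matrix m m R) (H : Matrix m n R) :
    (fromBlocks E (H * M) (M * Hᴴ) M).PosSemidef ↔ (E - H * M * Hᴴ).PosSemidef := by
  classical
  constructor
  · intro h
    have hconj : E - H * M * Hᴴ = fromCols (1 : Matrix m m R) (-H) *
        fromBlocks E (H * M) (M * Hᴴ) M * (fromCols (1 : Matrix m m R) (-H))ᴴ := by
      simp only [fromCols_mul_fromBlocks, conjTranspose_fromCols_eq_fromRows_conjTranspose,
        fromCols_mul_fromRows]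
      simp [Matrix.mul_assoc, sub_eq_add_neg]
    rw [hconj]
    exact h.mul_mul_conjTranspose_same _
  · intro h
    have hsplit : fromBlocks E (H * M) (M * Hᴴ) M =
        fromRows (1 : Matrix m m R) (0 : Matrix n m R) * (E - H * M * Hᴴ) *
            (fromRows (1 : Matrix m m R) (0 : Matrix n m R))ᴴ +
          fromRows H (1 : Matrix n n R) * M * (fromRows H (1 : Matrix n n R))ᴴ := by
      rw [conjTranspose_fromRows_eq_fromCols_conjTranspose,
        conjTranspose_fromRows_eq_fromCols_conjTranspose, fromRows_mul, fromRows_mul_fromCols,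
        fromRows_mul, fromRows_mul_fromCols, fromBlocks_add]
      simp
    rw [hsplit]
    exact (h.mul_mul_conjTranspose_same _).add (hM.mul_mul_conjTranspose_same _)

end Matrix

/-- The MRL global covariance matrix, with blocks `K*_1(X1,X1) = K1(X1,X1)`,
`K*_1(X1,XB) = K1(X1,XB)`, `K_B`, `K*_2(X2,XB) = K2(X2,XB)`, `K*_2(X2,X2) = K2(X2,X2)`
and cross term `D = G1 K_B G2ᵀ`, is symmetric positive semidefinite, provided `K1` and
`K2` are positive semidefinite, their boundary blocks both equal `K_B`, and `K_B` is
invertible. -/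
theorem stmt_3 {X1 XB X2 : Type*} [Fintype X1] [Fintype XB] [Fintype X2]
    [DecidableEq XB]
    (K1 : Matrix (X1 ⊕ XB) (X1 ⊕ XB) ℝ) (K2 : Matrix (XB ⊕ X2) (XB ⊕ X2) ℝ)
    (KB : Matrix XB XB ℝ)
    (hK1 : K1.PosSemidef) (hK2 : K2.PosSemidef)
    (hB1 : K1.toBlocks₂₂ = KB) (hB2 : K2.toBlocks₁₁ = KB)
    (hKB : IsUnit KB)
    (G1 : Matrix X1 XB ℝ) (G2 : Matrix X2 XB ℝ)
    (hG1 : G1 = K1.toBlocks₁₂ * KB⁻¹) (hG2 : G2 = K2.toBlocks₂₁ * KB⁻¹)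
    (D : Matrix X1 X2 ℝ) (hD : D = G1 * KB * G2ᵀ)
    (K : Matrix (X1 ⊕ (XB ⊕ X2)) (X1 ⊕ (XB ⊕ X2)) ℝ)
    (hK : K = Matrix.fromBlocks K1.toBlocks₁₁
      (Matrix.fromCols K1.toBlocks₁₂ D)
      (Matrix.fromRows K1.toBlocks₂₁ Dᵀ) K2) :
    K.PosSemidef := by
  have : Invertible KB := hKB.invertible
  rw [← conjTranspose_eq_transpose_of_trivial] at hD hK
  have hKB_psd : KB.PosSemidef := hB2 ▸ hK2.submatrix Sum.inl
  have hK1₁₂ : K1.toBlocks₁₂ = G1 * KB := by rw [hG1, inv_mul_cancel_right_of_invertible]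
  have hK1₂₁ : K1.toBlocks₂₁ = KB * G1ᴴ := by
    rw [← hK1.1.conjTranspose_toBlocks₁₂, hK1₁₂, conjTranspose_mul, hKB_psd.1]
  have hK2₁₂ : K2.toBlocks₁₂ = KB * G2ᴴ := by
    rw [← conjTranspose_conjTranspose K2.toBlocks₁₂, hK2.1.conjTranspose_toBlocks₁₂, hG2,
      conjTranspose_mul, conjTranspose_nonsing_inv, hKB_psd.1, mul_inv_cancel_left_of_invertible]
  have hSchur : (K1.toBlocks₁₁ - G1 * KB * G1ᴴ).PosSemidef := by
    rwa [← posSemidef_fromBlocks_mul_iff hKB_psd, ← hK1₁₂, ← hK1₂₁, ← hB1, fromBlocks_toBlocks]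
  set H : Matrix X1 (XB ⊕ X2) ℝ := fromCols G1 0
  have hHK2 : H * K2 = fromCols K1.toBlocks₁₂ D := by
    rw [← fromBlocks_toBlocks K2, fromCols_mul_fromBlocks, hB2, hK2₁₂, hK1₁₂, hD]
    simp [Matrix.mul_assoc]
  have hK2H : K2 * Hᴴ = fromRows K1.toBlocks₂₁ Dᴴ := by
    rw [← hK2.1, ← conjTranspose_mul, hHK2, conjTranspose_fromCols_eq_fromRows_conjTranspose,
      hK1.1.conjTranspose_toBlocks₁₂]
  rw [hK, ← hHK2, ← hK2H, posSemidef_fromBlocks_mul_iff hK2, hHK2,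
    conjTranspose_fromCols_eq_fromRows_conjTranspose, fromCols_mul_fromRows, hK1₁₂]
  rwa [conjTranspose_zero, Matrix.mul_zero, add_zero]
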